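/- arXiv:1202.2990 — 4 statements merged into one kernel-verified Lean document; each statement's English description precedes it below -/
import Mathlib

section
/- Let n ≥ 1, let x = (x_1, …, x_n) ∈ ℝ^n with Σ_{i=1}^n x_i² = 1, and let ε_1, …, ε_n be independent random variables with Pr(ε_i = 1) = Pr(ε_i = −1) = 1/2. Then Pr(|Σ_{i=1}^n ε_i x_i| ≤ 1) ≥ 0.36. -/
open Classical Finset

/-- The sign `±1` associated to a Boolean: this encodes a Rademacher variable. -/
noncomputable def sgn (b : Bool) : ℝ := if b then 1 else -1

/-- Probability of an event under the uniform measure on the `2^n` sign vectors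
`ε ∈ {-1,1}^n`, encoded as Boolean vectors `σ : Fin n → Bool`. -/
noncomputable def prSign (n : ℕ) (P : (Fin n → Bool) → Prop) : ℝ :=
  ((Finset.univ.filter P).card : ℝ) / 2 ^ n

/-!
If some coordinate has `x a ^ 2 ≥ 2/7`, pair every sign vector with the one obtained by flipping
`ε a`: when the rest `R` of the sum satisfies `|R| ≤ 1 + |x a|`, one of `R ± x a` lies in
`[-1, 1]`, and the fourth moment bound `E R⁴ ≤ 3 (1 - x a ^ 2)²` makes `|R| ≤ 1 + |x a|` likely.

Otherwise every coordinate is small. A quartic `g` with no cubic term gives a trigonometric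
polynomial `g (cos (7 s / 10))` lying below `1{|s| ≤ 1} + 1{|s| ≥ 7.97}`. Its expectation is a
combination of the characteristic function values `E cos (t S) = ∏ cos (t xᵢ)`, which are close
to `exp (-t² / 2)` because `log cos y ≥ -y² / 2 - y⁴ / 8` and `∑ xᵢ⁴ ≤ 2/7`; the tail
`|S| ≥ 7.97` is negligible by the fourth moment.
-/

open Real

theorem one_sub_sq_div_two_add_pow_four_div_32_le_cos {y : ℝ} (hy : y ^ 2 ≤ 4) :
    1 - y ^ 2 / 2 + y ^ 4 / 32 ≤ cos y := by
  have h0 : 0 ≤ 1 - (y / 2) ^ 2 / 2 := by nlinarith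
  calc 1 - y ^ 2 / 2 + y ^ 4 / 32 = 2 * (1 - (y / 2) ^ 2 / 2) ^ 2 - 1 := by ring
    _ ≤ 2 * cos (y / 2) ^ 2 - 1 := by gcongr; exact one_sub_sq_div_two_le_cos
    _ = cos y := by rw [← cos_two_mul]; ring_nf

theorem exp_neg_le_cos {y : ℝ} (hy : y ^ 2 ≤ 9 / 16) :
    exp (-(y ^ 2 / 2 + y ^ 4 / 8)) ≤ cos y := by
  have hv0 : 0 ≤ y ^ 2 := sq_nonneg y
  have hw0 : 0 ≤ y ^ 2 / 2 + y ^ 4 / 8 := by positivity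
  have hexp : ∀ w : ℝ, 0 ≤ w → 1 + w + w ^ 2 / 2 + w ^ 3 / 6 ≤ exp w := fun w hw => by
    have := sum_le_exp_of_nonneg hw 4
    norm_num [sum_range_succ, Nat.factorial] at this
    linarith
  have hcos := one_sub_sq_div_two_add_pow_four_div_32_le_cos (y := y) (by linarith)
  -- the product in the first step below, minus `1`, is `y⁴ (Q + y¹² / 98304)` with `Q` this
  have hQ : 0 ≤ 1 / 32 - 5 * y ^ 2 / 192 - y ^ 4 / 96 - y ^ 6 / 192 - 11 * y ^ 8 / 12288
      - y ^ 10 / 24576 := by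
    have h1 : y ^ 2 ≤ 1 := by linarith
    nlinarith [pow_le_one₀ hv0 h1 (n := 2), pow_le_one₀ hv0 h1 (n := 3),
      pow_le_one₀ hv0 h1 (n := 4)]
  rw [exp_neg, inv_le_iff_one_le_mul₀ (exp_pos _)]
  calc
    (1 : ℝ) ≤ (1 - y ^ 2 / 2 + y ^ 4 / 32) * (1 + (y ^ 2 / 2 + y ^ 4 / 8)
        + (y ^ 2 / 2 + y ^ 4 / 8) ^ 2 / 2 + (y ^ 2 / 2 + y ^ 4 / 8) ^ 3 / 6) := by
      nlinarith [mul_nonneg hv0 hQ, pow_nonneg hv0 8]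
    _ ≤ cos y * exp (y ^ 2 / 2 + y ^ 4 / 8) :=
      mul_le_mul hcos (hexp _ hw0) (by positivity) (by nlinarith)

theorem exp_neg_le_prod_cos {ι : Type*} (s : Finset ι) (x : ι → ℝ) {t δ : ℝ}
    (hx : ∑ i ∈ s, x i ^ 2 ≤ 1) (hδ : 0 ≤ δ) (hxδ : ∀ i ∈ s, x i ^ 2 ≤ δ)
    (ht : t ^ 2 * δ ≤ 9 / 16) :
    exp (-(t ^ 2 / 2 + δ * t ^ 4 / 8)) ≤ ∏ i ∈ s, cos (t * x i) := by
  have hfour : ∑ i ∈ s, x i ^ 4 ≤ δ :=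
    calc ∑ i ∈ s, x i ^ 4 = ∑ i ∈ s, x i ^ 2 * x i ^ 2 := by simp only [← pow_add]
      _ ≤ ∑ i ∈ s, δ * x i ^ 2 := sum_le_sum fun i hi =>
          mul_le_mul_of_nonneg_right (hxδ i hi) (sq_nonneg _)
      _ ≤ δ := by rw [← mul_sum]; exact mul_le_of_le_one_right hδ hx
  calc exp (-(t ^ 2 / 2 + δ * t ^ 4 / 8))
      ≤ exp (-∑ i ∈ s, ((t * x i) ^ 2 / 2 + (t * x i) ^ 4 / 8)) := by
        gcongr
        simp only [mul_pow, sum_add_distrib, ← sum_div, ← mul_sum]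
        have ht2 := sq_nonneg t
        have ht4 : 0 ≤ t ^ 4 := by positivity
        nlinarith [mul_le_mul_of_nonneg_left hx ht2, mul_le_mul_of_nonneg_left hfour ht4]
    _ = ∏ i ∈ s, exp (-((t * x i) ^ 2 / 2 + (t * x i) ^ 4 / 8)) := by
        rw [← sum_neg_distrib, exp_sum]
    _ ≤ ∏ i ∈ s, cos (t * x i) :=
        prod_le_prod (fun _ _ => (exp_pos _).le) fun i hi => exp_neg_le_cos <| by
          rw [mul_pow]
          nlinarith [mul_le_mul_of_nonneg_left (hxδ i hi) (sq_nonneg t)]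

/-- With no cubic term, `minorantPoly (cos θ)` only involves `cos θ`, `cos 2θ` and `cos 4θ`. -/
noncomputable def minorantPoly (c : ℝ) : ℝ :=
  299 / 100 * (c - 96 / 125) * (c + 561 / 500) * (c - 177 / 1000) ^ 2

theorem minorantPoly_cos (θ : ℝ) :
    minorantPoly (cos θ) = -1213169831913 / 3125000000000 + 1890462483 / 2000000000 * cos θ
      + 13250783 / 200000000 * cos (2 * θ) + 299 / 800 * cos (4 * θ) := by
  rw [show 4 * θ = 2 * (2 * θ) by ring, cos_two_mul (2 * θ), cos_two_mul θ, minorantPoly]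
  ring

theorem minorantPoly_le_one {c : ℝ} (h1 : -1 ≤ c) (h2 : c ≤ 1) : minorantPoly c ≤ 1 := by
  unfold minorantPoly
  nlinarith [mul_nonneg (sub_nonneg.2 h1) (sub_nonneg.2 h2), sq_nonneg (c - 177 / 1000),
    mul_nonneg (mul_nonneg (sub_nonneg.2 h1) (sub_nonneg.2 h2)) (sq_nonneg (c - 177 / 1000)),
    sq_nonneg ((c - 1) * (c + 1))]

theorem minorantPoly_nonpos {c : ℝ} (h1 : -1 ≤ c) (h2 : c ≤ 96 / 125) : minorantPoly c ≤ 0 := by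
  have h : 0 ≤ (96 / 125 - c) * (c + 561 / 500) * (c - 177 / 1000) ^ 2 := by
    have := sub_nonneg.2 h2
    have : 0 ≤ c + 561 / 500 := by linarith
    positivity
  unfold minorantPoly
  linarith

/-- `7.97` is just below `(2π - 0.7) / 0.7`, where `cos (0.7 s) ≤ cos 0.7` stops holding. -/
theorem cos_le_of_one_le_abs {s : ℝ} (h1 : 1 ≤ |s|) (h2 : |s| ≤ 797 / 100) :
    cos (7 / 10 * s) ≤ 96 / 125 := by
  have hcos : cos (7 / 10) ≤ 96 / 125 := by
    have h := cos_bound (x := 7 / 10) (by norm_num [abs_of_nonneg])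
    rw [abs_of_nonneg (by norm_num : (0 : ℝ) ≤ 7 / 10)] at h
    linarith [(abs_le.mp h).2]
  have hpi := pi_gt_d6
  rw [← cos_abs, abs_mul, abs_of_nonneg (by norm_num : (0 : ℝ) ≤ 7 / 10)]
  rcases le_or_gt (7 / 10 * |s|) π with hle | hgt
  · exact (cos_le_cos_of_nonneg_of_le_pi (by norm_num) hle (by linarith)).trans hcos
  · rw [← cos_two_pi_sub]
    exact (cos_le_cos_of_nonneg_of_le_pi (by norm_num) (by linarith) (by linarith)).trans hcos

theorem minorantPoly_cos_le (s : ℝ) :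
    minorantPoly (cos (7 / 10 * s))
      ≤ (if |s| ≤ 1 then 1 else 0) + (if 797 / 100 ≤ |s| then 1 else 0) := by
  have h1 := neg_one_le_cos (7 / 10 * s)
  have h2 := cos_le_one (7 / 10 * s)
  split_ifs with hs hs' hs' <;> try linarith [minorantPoly_le_one h1 h2]
  rw [add_zero]
  exact minorantPoly_nonpos h1 (cos_le_of_one_le_abs (not_le.1 hs).le (not_le.1 hs').le)

namespace Rademacher

variable {n : ℕ}

noncomputable def signedSum (x : Fin n → ℝ) (s : Finset (Fin n)) (σ : Fin n → Bool) : ℝ :=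
  ∑ i ∈ s, sgn (σ i) * x i

def flipAt (a : Fin n) (σ : Fin n → Bool) : Fin n → Bool := Function.update σ a (!σ a)

theorem flipAt_involutive (a : Fin n) : Function.Involutive (flipAt a) := by
  intro σ
  ext i
  by_cases h : i = a
  · subst h; simp [flipAt]
  · simp [flipAt, Function.update_of_ne h]

theorem sum_comp_flipAt (a : Fin n) (F : (Fin n → Bool) → ℝ) :
    ∑ σ, F (flipAt a σ) = ∑ σ, F σ :=
  Equiv.sum_comp ((flipAt_involutive a).toPerm _) F

theorem signedSum_insert (x : Fin n → ℝ) {s : Finset (Fin n)} {a : Fin n} (ha : a ∉ s)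
    (σ : Fin n → Bool) : signedSum x (insert a s) σ = sgn (σ a) * x a + signedSum x s σ :=
  sum_insert ha

theorem signedSum_flipAt (x : Fin n → ℝ) {s : Finset (Fin n)} {a : Fin n} (ha : a ∉ s)
    (σ : Fin n → Bool) : signedSum x s (flipAt a σ) = signedSum x s σ :=
  sum_congr rfl fun i hi => by
    rw [flipAt, Function.update_of_ne (ne_of_mem_of_not_mem hi ha)]

/-- Pairing `σ` with `flipAt a σ` averages over the sign of the coordinate `a`. -/
theorem two_mul_sum_signedSum_insert (x : Fin n → ℝ) {s : Finset (Fin n)} {a : Fin n}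
    (ha : a ∉ s) (F : ℝ → ℝ) :
    2 * ∑ σ, F (signedSum x (insert a s) σ)
      = ∑ σ, (F (signedSum x s σ + x a) + F (signedSum x s σ - x a)) := by
  rw [two_mul]
  nth_rewrite 2 [← sum_comp_flipAt a]
  rw [← sum_add_distrib]
  refine sum_congr rfl fun σ _ => ?_
  rw [signedSum_insert x ha, signedSum_insert x ha, signedSum_flipAt x ha, flipAt,
    Function.update_self]
  cases σ a <;> simp only [sgn, Bool.not_false, Bool.not_true, Bool.false_eq_true, if_true,
    if_false] <;> ring_nf

theorem card_univ_eq_two_pow : ((univ : Finset (Fin n → Bool)).card : ℝ) = 2 ^ n := by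
  simp

theorem sum_signedSum_sq (x : Fin n → ℝ) (s : Finset (Fin n)) :
    ∑ σ, signedSum x s σ ^ 2 = 2 ^ n * ∑ i ∈ s, x i ^ 2 := by
  induction s using Finset.induction_on with
  | empty => simp [signedSum]
  | @insert a s ha ih =>
    have h := two_mul_sum_signedSum_insert x ha (· ^ 2)
    have hpair : ∀ r y : ℝ, (r + y) ^ 2 + (r - y) ^ 2 = 2 * r ^ 2 + 2 * y ^ 2 := fun r y => by ring
    simp only [hpair, sum_add_distrib, ← mul_sum, ih, sum_const, nsmul_eq_mul,
      card_univ_eq_two_pow] at h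
    rw [sum_insert ha]
    linarith

theorem sum_signedSum_pow_four_le (x : Fin n → ℝ) (s : Finset (Fin n)) :
    ∑ σ, signedSum x s σ ^ 4 ≤ 3 * 2 ^ n * (∑ i ∈ s, x i ^ 2) ^ 2 := by
  induction s using Finset.induction_on with
  | empty => simp [signedSum]
  | @insert a s ha ih =>
    have h := two_mul_sum_signedSum_insert x ha (· ^ 4)
    have hpair : ∀ r y : ℝ,
        (r + y) ^ 4 + (r - y) ^ 4 = 2 * r ^ 4 + 12 * y ^ 2 * r ^ 2 + 2 * y ^ 4 := fun r y => by
      ring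
    simp only [hpair, sum_add_distrib, ← mul_sum, sum_signedSum_sq, sum_const, nsmul_eq_mul,
      card_univ_eq_two_pow] at h
    rw [sum_insert ha]
    have hs : 0 ≤ ∑ i ∈ s, x i ^ 2 := sum_nonneg fun i _ => sq_nonneg _
    nlinarith [pow_pos (two_pos (α := ℝ)) n, sq_nonneg (x a ^ 2), mul_nonneg hs (sq_nonneg (x a))]

theorem sum_cos_mul_signedSum (x : Fin n → ℝ) (s : Finset (Fin n)) (t : ℝ) :
    ∑ σ, cos (t * signedSum x s σ) = 2 ^ n * ∏ i ∈ s, cos (t * x i) := by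
  induction s using Finset.induction_on with
  | empty => simp [signedSum]
  | @insert a s ha ih =>
    have h := two_mul_sum_signedSum_insert x ha (fun r => cos (t * r))
    have hpair : ∀ r : ℝ, cos (t * (r + x a)) + cos (t * (r - x a))
        = 2 * cos (t * x a) * cos (t * r) := fun r => by
      rw [mul_add, mul_sub, cos_add, cos_sub]; ring
    simp only [hpair, ← mul_sum, ih] at h
    rw [prod_insert ha]
    linarith

theorem card_mul_pow_four_le (x : Fin n → ℝ) (s : Finset (Fin n)) {a : ℝ} (ha : 0 < a) :
    (#{σ | a ≤ |signedSum x s σ|} : ℝ) * a ^ 4 ≤ 3 * 2 ^ n * (∑ i ∈ s, x i ^ 2) ^ 2 :=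
  calc (#{σ | a ≤ |signedSum x s σ|} : ℝ) * a ^ 4
      = ∑ σ with a ≤ |signedSum x s σ|, a ^ 4 := by rw [sum_const, nsmul_eq_mul]
    _ ≤ ∑ σ with a ≤ |signedSum x s σ|, signedSum x s σ ^ 4 :=
      sum_le_sum fun σ hσ => (Even.pow_abs ⟨2, rfl⟩ (signedSum x s σ)) ▸
        pow_le_pow_left₀ ha.le (mem_filter.1 hσ).2 4
    _ ≤ ∑ σ, signedSum x s σ ^ 4 :=
      sum_le_sum_of_subset_of_nonneg (filter_subset _ _) fun _ _ _ => by positivity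
    _ ≤ 3 * 2 ^ n * (∑ i ∈ s, x i ^ 2) ^ 2 := sum_signedSum_pow_four_le x s

theorem abs_add_le_one_or_abs_sub_le_one {r y : ℝ} (hy : |y| ≤ 1) (hr : |r| ≤ 1 + |y|) :
    |r + y| ≤ 1 ∨ |r - y| ≤ 1 := by
  rcases abs_cases y with ⟨hy', _⟩ | ⟨hy', _⟩ <;> rcases abs_cases r with ⟨hr', _⟩ | ⟨hr', _⟩ <;>
    rw [hy'] at hy hr <;> rw [hr'] at hr
  all_goals first
    | (left; rw [abs_le]; constructor <;> linarith)
    | (right; rw [abs_le]; constructor <;> linarith)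

theorem le_card_abs_signedSum_le_one_of_sq_ge (x : Fin n → ℝ) (hx : ∑ i, x i ^ 2 = 1)
    (a : Fin n) (ha : 2 / 7 ≤ x a ^ 2) :
    9 / 25 * 2 ^ n ≤ (#{σ | |signedSum x univ σ| ≤ 1} : ℝ) := by
  set m := |x a|
  set R := signedSum x (univ.erase a)
  have hm_sq : m ^ 2 = x a ^ 2 := sq_abs _
  have hm1 : m ≤ 1 := by
    have := single_le_sum (fun i _ => sq_nonneg (x i)) (mem_univ a)
    nlinarith [abs_nonneg (x a)]
  have hR : ∑ i ∈ univ.erase a, x i ^ 2 = 1 - m ^ 2 := by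
    rw [sum_erase_eq_sub (mem_univ a), hx, hm_sq]
  have hpair := two_mul_sum_signedSum_insert x (notMem_erase a univ)
    (fun r => if |r| ≤ 1 then (1 : ℝ) else 0)
  rw [insert_erase (mem_univ a), sum_boole] at hpair
  have hnear : ∑ σ, (if |R σ| ≤ 1 + m then (1 : ℝ) else 0)
      ≤ 2 * #{σ | |signedSum x univ σ| ≤ 1} := by
    rw [hpair]
    refine sum_le_sum fun σ _ => ?_
    split_ifs with h1 h2 h3 h3
    all_goals norm_num
    exact (abs_add_le_one_or_abs_sub_le_one hm1 h1).elim h2 h3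
  have hfar : (2 : ℝ) ^ n
      ≤ ∑ σ, (if |R σ| ≤ 1 + m then (1 : ℝ) else 0) + #{σ | 1 + m ≤ |R σ|} := by
    rw [← sum_boole, ← sum_add_distrib, ← card_univ_eq_two_pow, cast_card]
    refine sum_le_sum fun σ _ => ?_
    split_ifs <;> norm_num
    linarith
  have hmarkov := card_mul_pow_four_le x (univ.erase a) (a := 1 + m) (by positivity)
  rw [hR] at hmarkov
  -- `√(2/7) > 0.5345`, and this is `(1 - 3 ((1 - m) / (1 + m)) ^ 2) / 2 ≥ 9 / 25`
  have hm : 75 * (1 - m) ^ 2 ≤ 7 * (1 + m) ^ 2 := by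
    have : 5345 / 10000 ≤ m := by nlinarith [abs_nonneg (x a)]
    nlinarith
  have hpos : 0 < (1 + m) ^ 2 := by positivity
  have hN : (0 : ℝ) ≤ 2 ^ n := by positivity
  set T : ℝ := (#{σ | 1 + m ≤ |R σ|} : ℝ)
  have hT : T * (1 + m) ^ 2 ≤ 3 * 2 ^ n * (1 - m) ^ 2 :=
    le_of_mul_le_mul_right (by linear_combination hmarkov) hpos
  have hT' : 25 * T ≤ 7 * 2 ^ n :=
    le_of_mul_le_mul_right (by nlinarith [mul_le_mul_of_nonneg_left hm hN]) hpos
  linarith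

theorem sum_minorantPoly_cos (x : Fin n → ℝ) :
    ∑ σ, minorantPoly (cos (7 / 10 * signedSum x univ σ))
      = 2 ^ n * (-1213169831913 / 3125000000000
        + 1890462483 / 2000000000 * ∏ i, cos (7 / 10 * x i)
        + 13250783 / 200000000 * ∏ i, cos (7 / 5 * x i)
        + 299 / 800 * ∏ i, cos (14 / 5 * x i)) := by
  simp only [minorantPoly_cos, ← mul_assoc, sum_add_distrib, ← mul_sum, sum_const,
    card_univ_eq_two_pow, nsmul_eq_mul]
  norm_num only [sum_cos_mul_signedSum]
  ring

theorem le_card_abs_signedSum_le_one_of_sq_le (x : Fin n → ℝ) (hx : ∑ i, x i ^ 2 = 1)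
    (hsmall : ∀ i, x i ^ 2 ≤ 2 / 7) :
    9 / 25 * 2 ^ n ≤ (#{σ | |signedSum x univ σ| ≤ 1} : ℝ) := by
  have hN : (0 : ℝ) ≤ 2 ^ n := by positivity
  have hP1 : (1 - ((7 / 10) ^ 2 / 2 + 2 / 7 * (7 / 10) ^ 4 / 8) / (16 : ℕ)) ^ 16
      ≤ ∏ i, cos (7 / 10 * x i) :=
    (one_sub_div_pow_le_exp_neg (by norm_num)).trans
      (exp_neg_le_prod_cos univ x hx.le (by norm_num) (fun i _ => hsmall i) (by norm_num))
  have hP2 : (1 - ((7 / 5) ^ 2 / 2 + 2 / 7 * (7 / 5) ^ 4 / 8) / (16 : ℕ)) ^ 16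
      ≤ ∏ i, cos (7 / 5 * x i) :=
    (one_sub_div_pow_le_exp_neg (by norm_num)).trans
      (exp_neg_le_prod_cos univ x hx.le (by norm_num) (fun i _ => hsmall i) (by norm_num))
  have hP3 : 0 ≤ ∏ i, cos (14 / 5 * x i) := prod_nonneg fun i _ => by
    have h : |14 / 5 * x i| ≤ 3 / 2 :=
      abs_le_of_sq_le_sq (by nlinarith [hsmall i]) (by norm_num)
    exact cos_nonneg_of_mem_Icc (abs_le.1 (h.trans (by linarith [pi_gt_three])))
  have hle : ∑ σ, minorantPoly (cos (7 / 10 * signedSum x univ σ))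
      ≤ #{σ | |signedSum x univ σ| ≤ 1} + #{σ | 797 / 100 ≤ |signedSum x univ σ|} := by
    rw [← sum_boole, ← sum_boole, ← sum_add_distrib]
    exact sum_le_sum fun σ _ => minorantPoly_cos_le _
  have hT := card_mul_pow_four_le x univ (a := 797 / 100) (by norm_num)
  rw [sum_minorantPoly_cos] at hle
  rw [hx] at hT
  norm_num at hP1 hP2 hT
  linarith [mul_le_mul_of_nonneg_left hP1 hN, mul_le_mul_of_nonneg_left hP2 hN,
    mul_nonneg hN hP3]

end Rademacher

theorem stmt0_general (n : ℕ) (x : Fin n → ℝ)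
    (hx : ∑ i, (x i) ^ 2 = 1) :
    prSign n (fun σ => |∑ i, sgn (σ i) * x i| ≤ 1) ≥ 0.36 := by
  rw [ge_iff_le, prSign, le_div_iff₀ (by positivity)]
  norm_num only
  by_cases hlarge : ∃ i, 2 / 7 ≤ x i ^ 2
  · obtain ⟨i, hi⟩ := hlarge
    exact Rademacher.le_card_abs_signedSum_le_one_of_sq_ge x hx i hi
  · simp only [not_exists, not_le] at hlarge
    exact Rademacher.le_card_abs_signedSum_le_one_of_sq_le x hx fun i => (hlarge i).le

theorem stmt0 (n : ℕ) (hn : 1 ≤ n) (x : Fin n → ℝ)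
    (hx : ∑ i, (x i) ^ 2 = 1) :
    prSign n (fun σ => |∑ i, sgn (σ i) * x i| ≤ 1) ≥ 0.36 :=
  stmt0_general n x hx
end

section
/- Let n ≥ 2, let x = (x_1, …, x_n) ∈ ℝ^n with x_1 ≥ x_2 ≥ … ≥ x_n ≥ 0, Σ_{i=1}^n x_i² = 1 and x_1 + x_2 > 1, and let ε_1, …, ε_n be independent random variables with Pr(ε_i = 1) = Pr(ε_i = −1) = 1/2. Set r = Σ_{i=3}^n ε_i x_i (an empty sum being 0). Then Pr(|Σ_{i=1}^n ε_i x_i| ≤ 1) ≥ (1/4)·( Pr(|r| ≤ 1 + x_1 + x_2) + Pr(|r| ≤ 1 + x_1 − x_2) ). -/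
/-!
Condition on the tail signs `τ = (ε₃, …, εₙ)`: then `r` is fixed and only `(ε₁, ε₂)` varies,
over four equally likely values. Write `a = x₁ ≥ b = x₂ ≥ 0`, so `a ≤ 1` because `∑ xᵢ² = 1`.
Up to the symmetry `ε ↦ -ε` we may take `r ≥ 0`; then `(ε₁, ε₂) = (-1, 1)` gives
`|Σ εᵢ xᵢ| ≤ 1` as soon as `r ≤ 1 + a - b`, and `(-1, -1)` or `(1, -1)` does as soon as
`r ≤ 1 + a + b`. So the number of good choices of `(ε₁, ε₂)` is at least
`[|r| ≤ 1 + a + b] + [|r| ≤ 1 + a - b]`, and averaging over `τ` gives the inequality.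
-/

open Classical Finset

lemma sgn_not (b : Bool) : sgn (!b) = -sgn b := by
  cases b <;> simp [sgn]

noncomputable def goodSignPairs (a b ρ : ℝ) : Finset (Bool × Bool) :=
  {p | |sgn p.1 * a + sgn p.2 * b + ρ| ≤ 1}

lemma card_goodSignPairs_neg (a b ρ : ℝ) :
    #(goodSignPairs a b (-ρ)) = #(goodSignPairs a b ρ) :=
  card_equiv (Equiv.boolNot.prodCongr Equiv.boolNot) fun p => by
    have : sgn (!p.1) * a + sgn (!p.2) * b + ρ = -(sgn p.1 * a + sgn p.2 * b + -ρ) := by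
      simp only [sgn_not]; ring
    simp only [goodSignPairs, mem_filter, mem_univ, true_and]
    show _ ↔ |sgn (!p.1) * a + sgn (!p.2) * b + ρ| ≤ 1
    rw [this, abs_neg]

lemma ite_add_ite_le_card_goodSignPairs {a b : ℝ} (hb : 0 ≤ b) (hba : b ≤ a) (ha : a ≤ 1)
    (ρ : ℝ) :
    (if |ρ| ≤ 1 + a + b then 1 else 0) + (if |ρ| ≤ 1 + a - b then 1 else 0) ≤
      #(goodSignPairs a b ρ) := by
  wlog hρ : 0 ≤ ρ generalizing ρ
  · simpa [abs_neg, card_goodSignPairs_neg] using this (-ρ) (by linarith)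
  rw [abs_of_nonneg hρ]
  by_cases hA : ρ ≤ 1 + a + b
  swap
  · have hB : ¬ ρ ≤ 1 + a - b := by linarith
    simp [hA, hB]
  obtain ⟨p, hp, hp₂⟩ : ∃ p ∈ goodSignPairs a b ρ, p.2 = false := by
    simp only [goodSignPairs, mem_filter, mem_univ, true_and]
    rcases le_total (a + b - 1) ρ with h | h
    · exact ⟨(false, false), by simp [sgn, abs_le]; constructor <;> linarith, rfl⟩
    · exact ⟨(true, false), by simp [sgn, abs_le]; constructor <;> linarith, rfl⟩
  by_cases hB : ρ ≤ 1 + a - b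
  · have hq : (false, true) ∈ goodSignPairs a b ρ := by
      simp [goodSignPairs, sgn, abs_le]; constructor <;> linarith
    have hpq : p ≠ (false, true) := by rintro rfl; simp at hp₂
    calc _ = #{p, (false, true)} := by simp [hA, hB, card_pair hpq]
      _ ≤ _ := card_le_card (by simp [insert_subset_iff, hp, hq])
  · rw [if_pos hA, if_neg hB]
    exact card_pos.2 ⟨p, hp⟩

lemma card_filter_eq_sum_card_filter_cons_cons {β : Type*} [Fintype β] {m : ℕ}
    (P : (Fin (m + 2) → β) → Prop) :
    #{σ | P σ} = ∑ τ : Fin m → β, #{p : β × β | P (Fin.cons p.1 (Fin.cons p.2 τ))} := by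
  let e : (β × β) × (Fin m → β) ≃ (Fin (m + 2) → β) :=
    ((Equiv.prodAssoc _ _ _).trans ((Equiv.refl β).prodCongr (Fin.consEquiv fun _ => β))).trans
      (Fin.consEquiv fun _ => β)
  calc #{σ | P σ} = #{q | P (e q)} := (card_equiv e (by simp)).symm
    _ = _ := by rw [card_filter, Fintype.sum_prod_type_right]; simp only [card_filter]; rfl

lemma prSign_add_two_of_tail {m : ℕ} {P : (Fin (m + 2) → Bool) → Prop}
    {Q : (Fin m → Bool) → Prop} (hPQ : ∀ s t τ, P (Fin.cons s (Fin.cons t τ)) ↔ Q τ) :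
    prSign (m + 2) P = prSign m Q := by
  have hfiber : ∀ τ, #{p : Bool × Bool | Q τ} = 4 * if Q τ then 1 else 0 := by
    intro τ
    split_ifs <;> simp [*]
  simp only [prSign, card_filter_eq_sum_card_filter_cons_cons, hPQ, hfiber, ← mul_sum,
    ← card_filter]
  push_cast
  rw [pow_add]
  ring

theorem stmt1 (n : ℕ) (hn : 2 ≤ n) (x : Fin n → ℝ)
    (hmono : ∀ i j : Fin n, i ≤ j → x j ≤ x i)
    (hnonneg : ∀ i, 0 ≤ x i)
    (hx : ∑ i, (x i) ^ 2 = 1)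
    (r : (Fin n → Bool) → ℝ)
    (hr : ∀ σ, r σ = ∑ i ∈ Finset.univ.filter (fun i : Fin n => 2 ≤ (i : ℕ)),
      sgn (σ i) * x i) :
    prSign n (fun σ => |∑ i, sgn (σ i) * x i| ≤ 1) ≥
      (1 / 4) * (prSign n (fun σ => |r σ| ≤ 1 + x ⟨0, by omega⟩ + x ⟨1, by omega⟩)
        + prSign n (fun σ => |r σ| ≤ 1 + x ⟨0, by omega⟩ - x ⟨1, by omega⟩)) := by
  obtain ⟨m, rfl⟩ := Nat.exists_eq_add_of_le' hn
  set T : (Fin m → Bool) → ℝ := fun τ => ∑ j, sgn (τ j) * x j.succ.succ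
  have hsum : ∀ s t τ, ∑ i, sgn (Fin.cons s (Fin.cons t τ) i : Bool) * x i =
      sgn s * x 0 + sgn t * x 1 + T τ := by
    intro s t τ
    simp [Fin.sum_univ_succ, T, add_assoc]
  have hrT : ∀ s t τ, r (Fin.cons s (Fin.cons t τ)) = T τ := by
    intro s t τ
    simp [hr, sum_filter, Fin.sum_univ_succ, T]
  have ha : x 0 ≤ 1 :=
    (sq_le_one_iff₀ (hnonneg 0)).1 (hx ▸ single_le_sum (fun i _ => sq_nonneg (x i)) (mem_univ 0))
  have hcount : #{τ | |T τ| ≤ 1 + x 0 + x 1} + #{τ | |T τ| ≤ 1 + x 0 - x 1} ≤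
      ∑ τ, #(goodSignPairs (x 0) (x 1) (T τ)) := by
    rw [card_filter, card_filter, ← sum_add_distrib]
    exact sum_le_sum fun τ _ =>
      ite_add_ite_le_card_goodSignPairs (hnonneg 1) (hmono 0 1 (Fin.zero_le _)) ha (T τ)
  simp only [Fin.zero_eta, Fin.mk_one]
  rw [prSign_add_two_of_tail (P := fun σ => |r σ| ≤ 1 + x 0 + x 1) (fun s t τ => by rw [hrT]),
    prSign_add_two_of_tail (P := fun σ => |r σ| ≤ 1 + x 0 - x 1) (fun s t τ => by rw [hrT]),
    prSign, card_filter_eq_sum_card_filter_cons_cons]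
  simp only [hsum, prSign]
  calc _ = ((#{τ | |T τ| ≤ 1 + x 0 + x 1} + #{τ | |T τ| ≤ 1 + x 0 - x 1} : ℕ) : ℝ) /
          2 ^ (m + 2) := by
        push_cast; ring
    _ ≤ _ := by gcongr; exact hcount
end

section
/- Let Y be a real-valued random variable whose distribution is symmetric (Y and −Y have the same distribution), let x ∈ [0, 1], and let c ∈ ℝ satisfy 1 − x ≤ |c| ≤ 1. Then Pr(|c + Y| ≤ 1) ≥ (1/2)·Pr(|Y| ≤ 2 − x). -/
open MeasureTheory ENNReal Set

/-! Half of the mass of `{|Y| ≤ 2 - x}` sits in `[-(2 - x), 0]` and half in `[0, 2 - x]`; shifting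
by `c` moves the half on the side opposite to `c` into `[-1, 1]`, because `2 - x ≤ 1 + |c|`. -/

theorem measure_preimage_neg_of_map_eq_map_neg {Ω α : Type*} [MeasurableSpace Ω]
    [MeasurableSpace α] [InvolutiveNeg α] [MeasurableNeg α] {μ : Measure Ω} {Y : Ω → α}
    (hY : Measurable Y)
    (hsym : μ.map Y = μ.map (fun ω => -Y ω)) {s : Set α} (hs : MeasurableSet s) :
    μ (Y ⁻¹' (-s)) = μ (Y ⁻¹' s) := by
  have h := congrArg (· (-s)) hsym
  rw [Measure.map_apply hY hs.neg, Measure.map_apply (f := fun ω => -Y ω) hY.neg hs.neg] at h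
  exact h.trans (congrArg μ (by ext; simp))

theorem half_measure_abs_le_le_measure_Icc {Ω : Type*} [MeasurableSpace Ω] {μ : Measure Ω}
    {Y : Ω → ℝ} (hY : Measurable Y) (hsym : μ.map Y = μ.map (fun ω => -Y ω)) (a : ℝ) :
    1 / 2 * μ {ω | |Y ω| ≤ a} ≤ μ (Y ⁻¹' Icc (-a) 0) := by
  have hhalves : μ (Y ⁻¹' Icc 0 a) = μ (Y ⁻¹' Icc (-a) 0) := by
    simpa [neg_Icc] using
      measure_preimage_neg_of_map_eq_map_neg hY hsym
        (measurableSet_Icc : MeasurableSet (Icc (-a) 0))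
  have hcover : μ {ω | |Y ω| ≤ a} ≤ 2 * μ (Y ⁻¹' Icc (-a) 0) := calc
    μ {ω | |Y ω| ≤ a} ≤ μ (Y ⁻¹' Icc (-a) 0 ∪ Y ⁻¹' Icc 0 a) := by
      refine measure_mono fun ω hω => ?_
      rw [mem_ofPred_eq, abs_le] at hω
      rcases le_total (Y ω) 0 with h | h
      exacts [Or.inl ⟨hω.1, h⟩, Or.inr ⟨h, hω.2⟩]
    _ ≤ μ (Y ⁻¹' Icc (-a) 0) + μ (Y ⁻¹' Icc 0 a) := measure_union_le _ _
    _ = 2 * μ (Y ⁻¹' Icc (-a) 0) := by rw [hhalves, two_mul]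
  calc 1 / 2 * μ {ω | |Y ω| ≤ a} ≤ 1 / 2 * (2 * μ (Y ⁻¹' Icc (-a) 0)) := by gcongr
    _ = μ (Y ⁻¹' Icc (-a) 0) := by
      rw [← mul_assoc, one_div, ENNReal.inv_mul_cancel two_ne_zero ofNat_ne_top, one_mul]

theorem stmt9_general {Ω : Type*} [MeasurableSpace Ω] (μ : Measure Ω)
    (Y : Ω → ℝ) (hY : Measurable Y)
    (hsym : μ.map Y = μ.map (fun ω => -Y ω))
    (x : ℝ)
    (c : ℝ) (hc1 : 1 - x ≤ |c|) (hc2 : |c| ≤ 1) :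
    μ {ω | |c + Y ω| ≤ 1} ≥ (1 / 2) * μ {ω | |Y ω| ≤ 2 - x} := by
  rcases le_total 0 c with hc | hc
  · rw [abs_of_nonneg hc] at hc1 hc2
    have hleft := half_measure_abs_le_le_measure_Icc hY hsym (2 - x)
    refine hleft.trans (measure_mono fun ω hω => ?_)
    exact show |c + Y ω| ≤ 1 from abs_le.2 ⟨by linarith [hω.1], by linarith [hω.2]⟩
  · rw [abs_of_nonpos hc] at hc1 hc2
    have hright := half_measure_abs_le_le_measure_Icc hY hsym (2 - x)
    rw [← measure_preimage_neg_of_map_eq_map_neg hY hsym measurableSet_Icc, neg_Icc, neg_neg,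
      neg_zero] at hright
    refine hright.trans (measure_mono fun ω hω => ?_)
    exact show |c + Y ω| ≤ 1 from abs_le.2 ⟨by linarith [hω.1], by linarith [hω.2]⟩

theorem stmt9 {Ω : Type*} [MeasurableSpace Ω] (μ : Measure Ω) [IsProbabilityMeasure μ]
    (Y : Ω → ℝ) (hY : Measurable Y)
    (hsym : μ.map Y = μ.map (fun ω => -Y ω))
    (x : ℝ) (hx : x ∈ Set.Icc (0 : ℝ) 1)
    (c : ℝ) (hc1 : 1 - x ≤ |c|) (hc2 : |c| ≤ 1) :
    μ {ω | |c + Y ω| ≤ 1} ≥ (1 / 2) * μ {ω | |Y ω| ≤ 2 - x} :=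
  stmt9_general μ Y hY hsym x c hc1 hc2
end

section
/- Let n ≥ 3, let x = (x_1, …, x_n) ∈ ℝ^n with x_1 ≥ x_2 ≥ … ≥ x_n ≥ 0, Σ_{i=1}^n x_i² = 1 and x_1 + x_2 ≤ 1, and let ε_1, …, ε_n be independent random variables with Pr(ε_i = 1) = Pr(ε_i = −1) = 1/2. For 1 ≤ j ≤ n set s_j = Σ_{i=1}^j ε_i x_i; for 2 ≤ k ≤ n − 1 let A_k be the event { |s_j| ≤ 1 − x_{j+1} for j = 1, …, k−1, and |s_k| > 1 − x_{k+1} }. If Pr(A_k) > 0, then the conditional probability satisfies Pr(|s_n| ≤ 1 | A_k) ≥ max{ g_k(x_{k+1}), h_k(x_{k+1}) }, where g_k(x) = (1/2)·(1 − (1 − k x²)/(2 − x)²) and h_k(x) = (1/2)·(1 − (1 − (1 − x)²/k)/(2 − x)²). -/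
open Classical Finset

/-- The function `g_k(x) = (1/2)(1 - (1 - k x²)/(2 - x)²)`. -/
noncomputable def gfun (k : ℕ) (x : ℝ) : ℝ :=
  (1 / 2) * (1 - (1 - (k : ℝ) * x ^ 2) / (2 - x) ^ 2)

/-- The function `h_k(x) = (1/2)(1 - (1 - (1 - x)²/k)/(2 - x)²)`. -/
noncomputable def hfun (k : ℕ) (x : ℝ) : ℝ :=
  (1 / 2) * (1 - (1 - (1 - x) ^ 2 / (k : ℝ)) / (2 - x) ^ 2)

lemma sgn_mul_self (b : Bool) : sgn b * sgn b = 1 := by cases b <;> simp [sgn]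

lemma abs_sgn (b : Bool) : |sgn b| = 1 := by cases b <;> simp [sgn]

lemma two_sub_lt_abs_of_one_lt_abs_add_of_one_lt_abs_sub {u t a : ℝ} (hu : |u| ≤ 1)
    (hua : 1 - a < |u|) (hplus : 1 < |u + t|) (hminus : 1 < |u - t|) : 2 - a < |t| := by
  rw [abs_le] at hu
  rw [lt_abs] at hua hplus hminus ⊢
  rcases hplus with h | h <;> rcases hminus with h' | h' <;> rcases hua with h'' | h'' <;>
    first | (left; linarith) | (right; linarith)

lemma card_le_two_mul_card_filter_add_card_filter {α : Type*} (A : Finset α) (p : α → Prop)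
    (f : α → α) (hf : Set.InjOn f A) (hfA : ∀ a ∈ A, f a ∈ A) :
    #A ≤ 2 * #(A.filter p) + #(A.filter fun a => ¬p a ∧ ¬p (f a)) := by
  have hgood_bad : #(A.filter p) + #(A.filter fun a => ¬p a) = #A :=
    card_filter_add_card_filter_not p
  have hbad : #(A.filter fun a => ¬p a) ≤
      #(A.filter fun a => ¬p a ∧ p (f a)) + #(A.filter fun a => ¬p a ∧ ¬p (f a)) := by
    rw [← card_union_of_disjoint (disjoint_filter.2 fun a _ h h' => h'.2 h.2)]
    exact card_le_card fun a ha => by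
      by_cases hfa : p (f a) <;> simp_all
  have hflip : #(A.filter fun a => ¬p a ∧ p (f a)) ≤ #(A.filter p) :=
    card_le_card_of_injOn f (fun a ha => by
      simp only [coe_filter, Set.mem_ofPred_eq] at ha ⊢
      exact ⟨hfA a ha.1, ha.2.2⟩) (hf.mono fun a ha => (mem_filter.1 ha).1)
  omega

lemma card_filter_lt_abs_mul_sq_le_sum_sq {α : Type*} (A : Finset α) (t : α → ℝ) {c : ℝ}
    (hc : 0 ≤ c) : #(A.filter fun a => c < |t a|) * c ^ 2 ≤ ∑ a ∈ A, t a ^ 2 := by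
  calc #(A.filter fun a => c < |t a|) * c ^ 2 = ∑ _a ∈ A.filter fun a => c < |t a|, c ^ 2 := by
        rw [sum_const, nsmul_eq_mul]
    _ ≤ ∑ a ∈ A.filter fun a => c < |t a|, t a ^ 2 := sum_le_sum fun a ha => by
        rw [← sq_abs (t a)]
        exact pow_le_pow_left₀ hc (mem_filter.1 ha).2.le 2
    _ ≤ ∑ a ∈ A, t a ^ 2 :=
        sum_le_sum_of_subset_of_nonneg (filter_subset _ _) fun _ _ _ => sq_nonneg _

section SignVectors

variable {ι : Type*}

noncomputable def signedSum (x : ι → ℝ) (I : Finset ι) (σ : ι → Bool) : ℝ :=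
  ∑ i ∈ I, sgn (σ i) * x i

def IsDeterminedOff (A : Finset (ι → Bool)) (R : Finset ι) : Prop :=
  ∀ σ σ', (∀ i ∉ R, σ i = σ' i) → σ ∈ A → σ' ∈ A

lemma signedSum_congr {x : ι → ℝ} {I : Finset ι} {σ σ' : ι → Bool}
    (h : ∀ i ∈ I, σ i = σ' i) : signedSum x I σ = signedSum x I σ' :=
  sum_congr rfl fun i hi => by rw [h i hi]

lemma abs_signedSum_le_sum {x : ι → ℝ} (hx : ∀ i, 0 ≤ x i) (I : Finset ι) (σ : ι → Bool) :
    |signedSum x I σ| ≤ ∑ i ∈ I, x i :=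
  (abs_sum_le_sum_abs _ _).trans_eq <| sum_congr rfl fun i _ => by
    rw [abs_mul, abs_sgn, one_mul, abs_of_nonneg (hx i)]

variable [DecidableEq ι]

def flipOn (R : Finset ι) (σ : ι → Bool) : ι → Bool :=
  fun i => if i ∈ R then !σ i else σ i

lemma signedSum_insert (x : ι → ℝ) {I : Finset ι} {i : ι} (hi : i ∉ I) (σ : ι → Bool) :
    signedSum x (insert i I) σ = sgn (σ i) * x i + signedSum x I σ :=
  sum_insert hi

lemma signedSum_univ [Fintype ι] (x : ι → ℝ) (R : Finset ι) (σ : ι → Bool) :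
    signedSum x univ σ = signedSum x Rᶜ σ + signedSum x R σ := by
  rw [add_comm, signedSum, signedSum, signedSum, ← sum_add_sum_compl R]

lemma flipOn_involutive (R : Finset ι) : Function.Involutive (flipOn R) := fun σ => by
  funext i
  by_cases hi : i ∈ R <;> simp [flipOn, hi]

lemma signedSum_flipOn_self (x : ι → ℝ) (R : Finset ι) (σ : ι → Bool) :
    signedSum x R (flipOn R σ) = -signedSum x R σ := by
  rw [signedSum, signedSum, ← sum_neg_distrib]
  exact sum_congr rfl fun i hi => by simp [flipOn, hi, sgn_not]

lemma signedSum_compl_flipOn [Fintype ι] (x : ι → ℝ) (R : Finset ι) (σ : ι → Bool) :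
    signedSum x Rᶜ (flipOn R σ) = signedSum x Rᶜ σ :=
  signedSum_congr fun i hi => by simp [flipOn, mem_compl.1 hi]

lemma IsDeterminedOff.flipOn_mem {A : Finset (ι → Bool)} {R : Finset ι}
    (hA : IsDeterminedOff A R) {σ : ι → Bool} (hσ : σ ∈ A) : flipOn R σ ∈ A :=
  hA σ _ (fun i hi => by simp [flipOn, hi]) hσ

lemma IsDeterminedOff.sum_sgn_mul_sgn_eq_zero {A : Finset (ι → Bool)} {R : Finset ι}
    (hA : IsDeterminedOff A R) {i j : ι} (hj : j ∈ R) (hij : i ≠ j) :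
    ∑ σ ∈ A, sgn (σ i) * sgn (σ j) = 0 := by
  refine sum_involution (fun σ _ => Function.update σ j (!σ j)) (fun σ _ => ?_)
    (fun σ _ _ h => ?_) (fun σ hσ => hA σ _ (fun l hl => ?_) hσ) (fun σ _ => ?_)
  · rw [Function.update_of_ne hij, Function.update_self, sgn_not]
    ring
  · simpa using congrFun h j
  · rw [Function.update_of_ne (ne_of_mem_of_not_mem hj hl).symm]
  · simp

lemma IsDeterminedOff.sum_signedSum_sq {A : Finset (ι → Bool)} {R : Finset ι}
    (hA : IsDeterminedOff A R) (x : ι → ℝ) :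
    ∑ σ ∈ A, signedSum x R σ ^ 2 = #A * ∑ i ∈ R, x i ^ 2 := by
  calc ∑ σ ∈ A, signedSum x R σ ^ 2
      = ∑ i ∈ R, ∑ j ∈ R, x i * x j * ∑ σ ∈ A, sgn (σ i) * sgn (σ j) := by
        simp only [signedSum, sq, sum_mul_sum]
        rw [sum_comm]
        refine sum_congr rfl fun i _ => ?_
        rw [sum_comm]
        exact sum_congr rfl fun j _ => by
          rw [mul_sum]
          exact sum_congr rfl fun σ _ => by ring
    _ = ∑ i ∈ R, x i * x i * ∑ σ ∈ A, sgn (σ i) * sgn (σ i) :=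
        sum_congr rfl fun i hi => sum_eq_single_of_mem i hi fun j hj hji => by
          rw [hA.sum_sgn_mul_sgn_eq_zero hj hji.symm, mul_zero]
    _ = #A * ∑ i ∈ R, x i ^ 2 := by
        simp only [sgn_mul_self, sum_const, nsmul_eq_mul, mul_sum]
        exact sum_congr rfl fun i _ => by ring

theorem IsDeterminedOff.le_card_filter_abs_signedSum_le_one_div_card [Fintype ι]
    {A : Finset (ι → Bool)} {R : Finset ι} (hA : IsDeterminedOff A R) (hAne : A.Nonempty)
    (x : ι → ℝ) {a : ℝ} (ha : a < 2)
    (hu : ∀ σ ∈ A, |signedSum x Rᶜ σ| ≤ 1 ∧ 1 - a < |signedSum x Rᶜ σ|) :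
    1 / 2 * (1 - (∑ i ∈ R, x i ^ 2) / (2 - a) ^ 2) ≤
      #(A.filter fun σ => |signedSum x univ σ| ≤ 1) / #A := by
  set S := A.filter fun σ => |signedSum x univ σ| ≤ 1
  set B := A.filter fun σ => 2 - a < |signedSum x R σ|
  have hcount : #A ≤ 2 * #S + #B := by
    refine (card_le_two_mul_card_filter_add_card_filter A (fun σ => |signedSum x univ σ| ≤ 1)
      (flipOn R) (flipOn_involutive R).injective.injOn fun σ => hA.flipOn_mem).trans ?_
    gcongr
    intro σ hσ
    simp only [B, mem_filter, not_le, signedSum_univ x R, signedSum_compl_flipOn,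
      signedSum_flipOn_self, ← sub_eq_add_neg] at hσ ⊢
    exact ⟨hσ.1, two_sub_lt_abs_of_one_lt_abs_add_of_one_lt_abs_sub (hu σ hσ.1).1 (hu σ hσ.1).2
      hσ.2.1 hσ.2.2⟩
  have hcheb : #B * (2 - a) ^ 2 ≤ #A * ∑ i ∈ R, x i ^ 2 :=
    hA.sum_signedSum_sq x ▸ card_filter_lt_abs_mul_sq_le_sum_sq A _ (by linarith)
  have hN : (0 : ℝ) < #A := by exact_mod_cast hAne.card_pos
  have hD : (0 : ℝ) < (2 - a) ^ 2 := by nlinarith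
  have hB : (#B : ℝ) ≤ #A * (∑ i ∈ R, x i ^ 2) / (2 - a) ^ 2 := by rwa [le_div_iff₀ hD]
  have hcountR : (#A : ℝ) ≤ 2 * #S + #B := by exact_mod_cast hcount
  rw [le_div_iff₀ hN]
  have : 1 / 2 * (1 - (∑ i ∈ R, x i ^ 2) / (2 - a) ^ 2) * #A =
      1 / 2 * (#A - #A * (∑ i ∈ R, x i ^ 2) / (2 - a) ^ 2) := by ring
  linarith

end SignVectors

lemma prSign_and_div_prSign (n : ℕ) (P Q : (Fin n → Bool) → Prop) :
    prSign n (fun σ => P σ ∧ Q σ) / prSign n Q =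
      #((univ.filter Q).filter P) / #(univ.filter Q) := by
  unfold prSign
  rw [div_div_div_cancel_right₀ (by positivity), filter_filter]
  simp only [and_comm]
  congr!

section PartialSums

variable {n : ℕ}

noncomputable def partialSum (x : Fin n → ℝ) (σ : Fin n → Bool) (j : ℕ) : ℝ :=
  signedSum x (univ.filter fun i : Fin n => (i : ℕ) < j) σ

lemma partialSum_congr {x : Fin n → ℝ} {σ σ' : Fin n → Bool} {j k : ℕ} (hjk : j ≤ k)
    (h : ∀ i : Fin n, (i : ℕ) < k → σ i = σ' i) : partialSum x σ j = partialSum x σ' j :=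
  signedSum_congr fun i hi => h i (by simp at hi; omega)

lemma partialSum_self (x : Fin n → ℝ) (σ : Fin n → Bool) :
    partialSum x σ n = signedSum x univ σ := by
  rw [partialSum, filter_true_of_mem fun i _ => i.isLt]

lemma partialSum_succ (x : Fin n → ℝ) (σ : Fin n → Bool) {j : ℕ} (hj : j < n) :
    partialSum x σ (j + 1) = sgn (σ ⟨j, hj⟩) * x ⟨j, hj⟩ + partialSum x σ j := by
  rw [partialSum, partialSum, ← signedSum_insert x (by simp) σ]
  congr 1
  ext i
  simp [Fin.ext_iff]
  omega

lemma abs_partialSum_succ_le_one {x : Fin n → ℝ} (hnonneg : ∀ i, 0 ≤ x i) {σ : Fin n → Bool}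
    {j : ℕ} (hj : j < n) (h : |partialSum x σ j| ≤ 1 - x ⟨j, hj⟩) :
    |partialSum x σ (j + 1)| ≤ 1 := by
  rw [partialSum_succ x σ hj]
  refine (abs_add_le _ _).trans ?_
  rw [abs_mul, abs_sgn, one_mul, abs_of_nonneg (hnonneg _)]
  linarith

lemma card_filter_val_lt_of_le {k : ℕ} (hk : k ≤ n) :
    #(univ.filter fun i : Fin n => (i : ℕ) < k) = k := by
  rw [Fin.card_filter_val_lt]
  omega

lemma mul_sq_le_sum_sq_filter_lt {x : Fin n → ℝ} (hmono : Antitone x) (hnonneg : ∀ i, 0 ≤ x i)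
    {k : ℕ} (hk : k < n) :
    k * x ⟨k, hk⟩ ^ 2 ≤ ∑ i ∈ univ.filter (fun i : Fin n => (i : ℕ) < k), x i ^ 2 := by
  nth_rewrite 1 [← card_filter_val_lt_of_le hk.le]
  rw [← nsmul_eq_mul]
  exact card_nsmul_le_sum _ _ _ fun i hi =>
    pow_le_pow_left₀ (hnonneg _) (hmono (Fin.le_def.2 (mem_filter.1 hi).2.le)) 2

lemma sq_div_le_sum_sq_filter_lt {x : Fin n → ℝ} (hnonneg : ∀ i, 0 ≤ x i) {k : ℕ} (hk : k ≤ n)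
    {c : ℝ} (hc : 0 ≤ c) {σ : Fin n → Bool} (hσ : c ≤ |partialSum x σ k|) :
    c ^ 2 / k ≤ ∑ i ∈ univ.filter (fun i : Fin n => (i : ℕ) < k), x i ^ 2 := by
  rcases k.eq_zero_or_pos with rfl | hk0
  · simp
  rw [div_le_iff₀ (by exact_mod_cast hk0), mul_comm]
  nth_rewrite 1 [← card_filter_val_lt_of_le hk]
  calc c ^ 2 ≤ (∑ i ∈ univ.filter (fun i : Fin n => (i : ℕ) < k), x i) ^ 2 :=
        pow_le_pow_left₀ hc (hσ.trans (abs_signedSum_le_sum hnonneg _ σ)) 2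
    _ ≤ _ := sq_sum_le_card_mul_sum_sq

theorem max_gfun_hfun_le_card_filter_div_card {x : Fin n → ℝ} (hmono : Antitone x)
    (hnonneg : ∀ i, 0 ≤ x i) (hx : ∑ i, x i ^ 2 = 1) {k : ℕ} (hkn : k < n)
    {A : Finset (Fin n → Bool)} (hA : IsDeterminedOff A (univ.filter fun i : Fin n => (i : ℕ) < k)ᶜ)
    (hAne : A.Nonempty)
    (hexit : ∀ σ ∈ A, |partialSum x σ k| ≤ 1 ∧ 1 - x ⟨k, hkn⟩ < |partialSum x σ k|) :
    max (gfun k (x ⟨k, hkn⟩)) (hfun k (x ⟨k, hkn⟩)) ≤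
      #(A.filter fun σ => |partialSum x σ n| ≤ 1) / #A := by
  set a := x ⟨k, hkn⟩
  set K := univ.filter fun i : Fin n => (i : ℕ) < k
  have ha1 : a ≤ 1 := by
    have : a ^ 2 ≤ 1 := hx ▸ single_le_sum (fun i _ => sq_nonneg (x i)) (mem_univ _)
    nlinarith [hnonneg ⟨k, hkn⟩]
  obtain ⟨σ₀, hσ₀⟩ := hAne
  have hQ₁ := mul_sq_le_sum_sq_filter_lt hmono hnonneg hkn
  have hQ₂ := sq_div_le_sum_sq_filter_lt hnonneg hkn.le (by linarith) (hexit σ₀ hσ₀).2.le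
  have hV : ∑ i ∈ Kᶜ, x i ^ 2 = 1 - ∑ i ∈ K, x i ^ 2 := by
    rw [← hx, ← sum_add_sum_compl K]
    ring
  have hcore := hA.le_card_filter_abs_signedSum_le_one_div_card ⟨σ₀, hσ₀⟩ x
    (by linarith : a < 2) fun σ hσ => by
      rw [compl_compl]
      exact hexit σ hσ
  rw [hV] at hcore
  simp only [partialSum_self]
  refine max_le (le_trans ?_ hcore) (le_trans ?_ hcore) <;> simp only [gfun, hfun] <;> gcongr

end PartialSums

theorem stmt18 (n : ℕ) (x : Fin n → ℝ)
    (hmono : ∀ i j : Fin n, i ≤ j → x j ≤ x i)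
    (hnonneg : ∀ i, 0 ≤ x i)
    (hx : ∑ i, (x i) ^ 2 = 1)
    (s : (Fin n → Bool) → ℕ → ℝ)
    (hs : ∀ σ j, s σ j =
      ∑ i ∈ Finset.univ.filter (fun i : Fin n => (i : ℕ) < j), sgn (σ i) * x i)
    (k : ℕ) (hk2 : 2 ≤ k) (hkn : k ≤ n - 1)
    (A : Set (Fin n → Bool))
    (hA : A = {σ | (∀ j (hj1 : 1 ≤ j) (hjk : j ≤ k - 1), |s σ j| ≤ 1 - x ⟨j, by omega⟩) ∧
        1 - x ⟨k, by omega⟩ < |s σ k|})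
    (hpos : prSign n (fun σ => σ ∈ A) > 0) :
    prSign n (fun σ => |s σ n| ≤ 1 ∧ σ ∈ A) / prSign n (fun σ => σ ∈ A)
      ≥ max (gfun k (x ⟨k, by omega⟩)) (hfun k (x ⟨k, by omega⟩)) := by
  obtain rfl : s = partialSum x := funext₂ hs
  have hdet : IsDeterminedOff (univ.filter (· ∈ A)) (univ.filter fun i : Fin n => (i : ℕ) < k)ᶜ :=
    fun σ σ' hσσ' hσ => by
      have h : ∀ j ≤ k, partialSum x σ' j = partialSum x σ j := fun j hj =>
        partialSum_congr hj fun i hi => (hσσ' i (by simpa using hi)).symm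
      simp only [mem_filter, mem_univ, true_and, hA, Set.mem_ofPred_eq, h k le_rfl] at hσ ⊢
      exact ⟨fun j hj1 hjk => h j (by omega) ▸ hσ.1 j hj1 hjk, hσ.2⟩
  have hsk : ∀ σ ∈ A, |partialSum x σ k| ≤ 1 := fun σ hσ => by
    obtain ⟨j, rfl⟩ : ∃ j, k = j + 1 := ⟨k - 1, by omega⟩
    rw [hA] at hσ
    exact abs_partialSum_succ_le_one hnonneg (by omega) (hσ.1 j (by omega) (by omega))
  have hne : (univ.filter (· ∈ A)).Nonempty := by
    unfold prSign at hpos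
    exact card_pos.1 (by exact_mod_cast (div_pos_iff_of_pos_right (by positivity)).1 hpos)
  rw [ge_iff_le, prSign_and_div_prSign]
  exact max_gfun_hfun_le_card_filter_div_card hmono hnonneg hx _ hdet hne fun σ hσ =>
    ⟨hsk σ (mem_filter.1 hσ).2, (hA ▸ (mem_filter.1 hσ).2).2⟩
end
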